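/- Let p ∈ (0,1] and define the p-modified harmonic function H_p(x) = ∫_0^1 (1 - (1 - p + pt)^x)/(1 - t) dt for x ≥ 0. Then H_p(x) = ψ(x+1) + γ + ln p + ∫_0^{1-p} z^x/(1-z) dz. -/

import Mathlib

/-!
Substituting `z = 1 - p + p t` turns `Hp p x` into `∫_{1-p}^1 g` with `g z = (1 - z^x) / (1 - z)`.
On `[0, 1 - p]` the integrand splits as `1 / (1 - z) - z^x / (1 - z)`, whose first part integrates
to `-log p`, so everything reduces to Gauss's formula `∫_0^1 g = ψ(x + 1) + γ`.
Expanding `g t = ∑ₖ (t^k - t^(x+k))` and integrating termwise (the terms are nonnegative and `g`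
is bounded by `max 1 x`) gives `∑ₖ (1/(k+1) - 1/(x+k+1))`, which telescopes through
`ψ(y + 1) = ψ y + 1/y` to `ψ(x + 1) - ψ 1` up to `ψ(n + 1 + x) - ψ(n + 1)`.
That error tends to `0` because convexity of `log Γ` squeezes `ψ y` between `log (y - 1)` and
`log y`.
-/

noncomputable def digamma (x : ℝ) : ℝ := deriv (fun y => Real.log (Real.Gamma y)) x

noncomputable def Hp (p x : ℝ) : ℝ := ∫ t in (0:ℝ)..1, (1 - (1 - p + p * t) ^ x) / (1 - t)

open Real Filter Topology Set MeasureTheory intervalIntegral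

local notation "γ" => Real.eulerMascheroniConstant

section Digamma

variable {x : ℝ}

lemma differentiableAt_log_Gamma (hx : 0 < x) :
    DifferentiableAt ℝ (fun y => log (Gamma y)) x :=
  (differentiableAt_Gamma fun m => by linarith [(m.cast_nonneg : (0:ℝ) ≤ m)]).log
    (Gamma_pos_of_pos hx).ne'

lemma log_Gamma_add_one (hx : 0 < x) : log (Gamma (x + 1)) = log (Gamma x) + log x := by
  rw [Gamma_add_one hx.ne', log_mul hx.ne' (Gamma_pos_of_pos hx).ne', add_comm]

lemma digamma_add_one (hx : 0 < x) : digamma (x + 1) = digamma x + x⁻¹ := by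
  rw [digamma, digamma, ← deriv_comp_add_const, ← deriv_log,
    ← deriv_add (differentiableAt_log_Gamma hx) (differentiableAt_log hx.ne')]
  exact EventuallyEq.deriv_eq <| by
    filter_upwards [eventually_gt_nhds hx] with y hy using log_Gamma_add_one hy

lemma digamma_add_nat (hx : 0 < x) (n : ℕ) :
    digamma (x + n) = digamma x + ∑ k ∈ Finset.range n, (x + k)⁻¹ := by
  induction n with
  | zero => simp
  | succ n ih =>
    rw [Nat.cast_succ, ← add_assoc, digamma_add_one (by positivity), ih, Finset.sum_range_succ,
      add_assoc]

lemma slope_log_Gamma (hx : 0 < x) : slope (fun y => log (Gamma y)) x (x + 1) = log x := by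
  rw [slope_def_field, add_sub_cancel_left, div_one, log_Gamma_add_one hx, add_sub_cancel_left]

lemma digamma_le_log (hx : 0 < x) : digamma x ≤ log x :=
  slope_log_Gamma hx ▸ convexOn_log_Gamma.deriv_le_slope hx (by simp; linarith) (by linarith)
    (differentiableAt_log_Gamma hx)

lemma log_le_digamma_add_one (hx : 0 < x) : log x ≤ digamma (x + 1) :=
  slope_log_Gamma hx ▸ convexOn_log_Gamma.slope_le_deriv hx (by simp; linarith) (by linarith)
    (differentiableAt_log_Gamma (by linarith))

lemma digamma_one : digamma 1 = -γ := by
  rw [digamma]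
  simpa using (hasDerivAt_Gamma_one.log (by simp)).deriv

lemma tendsto_digamma_sub_log : Tendsto (fun y => digamma y - log y) atTop (𝓝 0) := by
  refine tendsto_of_tendsto_of_tendsto_of_le_of_le' (tendsto_log_comp_add_sub_log (-1))
    tendsto_const_nhds ?_ ?_
  · filter_upwards [eventually_gt_atTop 1] with y hy
    have := log_le_digamma_add_one (x := y - 1) (by linarith)
    rw [sub_add_cancel] at this
    rw [← sub_eq_add_neg]
    linarith
  · filter_upwards [eventually_gt_atTop 0] with y hy
    linarith [digamma_le_log hy]

lemma tendsto_digamma_add_sub_digamma (a : ℝ) :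
    Tendsto (fun y => digamma (y + a) - digamma y) atTop (𝓝 0) := by
  have h := ((tendsto_digamma_sub_log.comp (tendsto_atTop_add_const_right _ a tendsto_id)).sub
    tendsto_digamma_sub_log).add (tendsto_log_comp_add_sub_log a)
  simp only [sub_zero, add_zero] at h
  refine h.congr fun y => ?_
  simp only [Function.comp_apply, id]
  ring

lemma hasSum_digamma_add_one (hx : 0 ≤ x) :
    HasSum (fun k : ℕ => ((k : ℝ) + 1)⁻¹ - (x + k + 1)⁻¹) (digamma (x + 1) + γ) := by
  refine (hasSum_iff_tendsto_nat_of_nonneg (fun k => sub_nonneg.2 ?_) _).2 ?_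
  · gcongr
    linarith
  have hpartial (n : ℕ) : ∑ k ∈ Finset.range n, (((k : ℝ) + 1)⁻¹ - (x + k + 1)⁻¹) =
      digamma (x + 1) + γ - (digamma (n + 1 + x) - digamma (n + 1)) := by
    rw [show (n + 1 + x : ℝ) = x + 1 + n by ring, add_comm (n : ℝ),
      digamma_add_nat (by linarith), digamma_add_nat one_pos, digamma_one, Finset.sum_sub_distrib]
    simp only [add_comm (1 : ℝ), add_right_comm x _ (1 : ℝ)]
    ring
  simp_rw [hpartial]
  have := (tendsto_digamma_add_sub_digamma x).comp
    (tendsto_atTop_add_const_right _ 1 tendsto_natCast_atTop_atTop)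
  simpa using (tendsto_const_nhds (x := digamma (x + 1) + γ)).sub this

end Digamma

section GaussIntegral

variable {x : ℝ}

lemma one_sub_rpow_le_max_mul {t : ℝ} (hx : 0 ≤ x) (ht0 : 0 ≤ t) (ht1 : t ≤ 1) :
    1 - t ^ x ≤ max 1 x * (1 - t) := by
  rcases le_total x 1 with h | h
  · have : t ≤ t ^ x := by
      simpa using rpow_le_rpow_of_exponent_ge' ht0 ht1 hx h
    nlinarith [le_max_left 1 x]
  · have := one_add_mul_self_le_rpow_one_add (by linarith : (-1 : ℝ) ≤ t - 1) h
    rw [add_sub_cancel] at this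
    nlinarith [le_max_right 1 x]

lemma hasSum_pow_sub_rpow {t : ℝ} (ht : t ∈ Ioc 0 1) :
    HasSum (fun k : ℕ => t ^ k - t ^ (x + k)) ((1 - t ^ x) / (1 - t)) := by
  have hterm (k : ℕ) : t ^ k - t ^ (x + k) = (1 - t ^ x) * t ^ k := by
    rw [rpow_add ht.1, rpow_natCast]
    ring
  simp_rw [hterm]
  -- at `t = 1` both sides vanish, the right one because `0 / 0 = 0`
  rcases ht.2.eq_or_lt with rfl | h1
  · simp
  · exact (hasSum_geometric_of_lt_one ht.1.le h1).mul_left _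

lemma intervalIntegrable_one_sub_rpow_div_one_sub (hx : 0 ≤ x) :
    IntervalIntegrable (fun t => (1 - t ^ x) / (1 - t)) volume 0 1 := by
  rw [intervalIntegrable_iff_integrableOn_Ioc_of_le zero_le_one]
  refine Measure.integrableOn_of_bounded (M := max 1 x) measure_Ioc_lt_top.ne
    (by fun_prop : Measurable fun t : ℝ => (1 - t ^ x) / (1 - t)).aestronglyMeasurable
    ((ae_restrict_iff' measurableSet_Ioc).2 <| .of_forall fun t ht => ?_)
  rcases ht.2.eq_or_lt with rfl | h1
  · simp
  · rw [norm_div, Real.norm_of_nonneg (sub_nonneg.2 (rpow_le_one ht.1.le ht.2 hx)),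
      Real.norm_of_nonneg (by linarith), div_le_iff₀ (by linarith)]
    exact one_sub_rpow_le_max_mul hx ht.1.le ht.2

lemma integral_pow_sub_rpow (hx : 0 ≤ x) (k : ℕ) :
    ∫ t in (0:ℝ)..1, (t ^ k - t ^ (x + k)) = ((k : ℝ) + 1)⁻¹ - (x + k + 1)⁻¹ := by
  have hxk : -1 < x + k := by linarith [(k.cast_nonneg : (0:ℝ) ≤ k)]
  rw [intervalIntegral.integral_sub (by simp) (intervalIntegrable_rpow' hxk), integral_pow,
    integral_rpow (.inl hxk)]
  simp [zero_rpow (by positivity : x + k + 1 ≠ 0)]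

lemma integral_one_sub_rpow_div_one_sub (hx : 0 ≤ x) :
    ∫ t in (0:ℝ)..1, (1 - t ^ x) / (1 - t) = digamma (x + 1) + γ := by
  have hsum (t : ℝ) (ht : t ∈ uIoc 0 1) :
      HasSum (fun k : ℕ => t ^ k - t ^ (x + k)) ((1 - t ^ x) / (1 - t)) :=
    hasSum_pow_sub_rpow (by rwa [uIoc_of_le zero_le_one] at ht)
  have hterm_nonneg (k : ℕ) (t : ℝ) (ht : t ∈ uIoc 0 1) : 0 ≤ t ^ k - t ^ (x + k) := by
    rw [uIoc_of_le zero_le_one] at ht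
    rw [sub_nonneg, ← rpow_natCast]
    exact rpow_le_rpow_of_exponent_ge ht.1 ht.2 (by linarith)
  have h := hasSum_integral_of_dominated_convergence
    (F := fun (k : ℕ) (t : ℝ) => t ^ k - t ^ (x + k)) (fun k t => t ^ k - t ^ (x + k))
    (fun k => by fun_prop)
    (fun k => .of_forall fun t ht => (Real.norm_of_nonneg (hterm_nonneg k t ht)).le)
    (.of_forall fun t ht => (hsum t ht).summable)
    ((intervalIntegrable_one_sub_rpow_div_one_sub hx).congr fun t ht =>
      (hsum t ht).tsum_eq.symm)
    (.of_forall hsum)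
  simp only [integral_pow_sub_rpow hx] at h
  exact h.unique (hasSum_digamma_add_one hx)

end GaussIntegral

lemma Hp_eq_integral (p x : ℝ) : Hp p x = ∫ z in (1 - p)..1, (1 - z ^ x) / (1 - z) := by
  rcases eq_or_ne p 0 with rfl | hp
  · simp [Hp]
  have h (t : ℝ) : (1 - (1 - p + p * t) ^ x) / (1 - t) =
      p • ((1 - (1 - p + p * t) ^ x) / (1 - (1 - p + p * t))) := by
    rw [smul_eq_mul, show 1 - (1 - p + p * t) = p * (1 - t) by ring, ← mul_div_assoc,
      mul_div_mul_left _ _ hp]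
  simp_rw [Hp, h, intervalIntegral.integral_smul]
  rw [smul_integral_comp_add_mul (fun z => (1 - z ^ x) / (1 - z))]
  norm_num

lemma integral_inv_one_sub {a : ℝ} (ha : a < 1) :
    ∫ z in (0:ℝ)..a, (1 - z)⁻¹ = -log (1 - a) := by
  rw [integral_comp_sub_left (fun z => z⁻¹), sub_zero,
    integral_inv (notMem_uIcc_of_lt (by linarith) one_pos), one_div, log_inv]

lemma integral_one_sub_rpow_div_one_sub_of_lt_one {x a : ℝ} (hx : 0 ≤ x) (ha : a < 1) :
    ∫ z in (0:ℝ)..a, (1 - z ^ x) / (1 - z) =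
      -log (1 - a) - ∫ z in (0:ℝ)..a, z ^ x / (1 - z) := by
  have hne : ∀ z ∈ uIcc 0 a, 1 - z ≠ 0 := fun z hz =>
    (sub_pos.2 (hz.2.trans_lt (max_lt one_pos ha))).ne'
  rw [← integral_inv_one_sub ha, ← intervalIntegral.integral_sub]
  · simp_rw [sub_div, one_div]
  · exact (continuousOn_const.sub continuousOn_id).inv₀ hne |>.intervalIntegrable
  · exact ((continuous_rpow_const hx).continuousOn.div (continuousOn_const.sub continuousOn_id)
      hne).intervalIntegrable

theorem Hp_eq (p x : ℝ) (hp : p ∈ Set.Ioc (0:ℝ) 1) (hx : 0 ≤ x) :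
    Hp p x = digamma (x + 1) + Real.eulerMascheroniConstant + Real.log p +
      ∫ z in (0:ℝ)..(1 - p), z ^ x / (1 - z) := by
  obtain ⟨hp0, hp1⟩ := hp
  have hint := intervalIntegrable_one_sub_rpow_div_one_sub hx
  rw [Hp_eq_integral, ← integral_interval_sub_left hint (hint.mono_set ?_),
    integral_one_sub_rpow_div_one_sub hx,
    integral_one_sub_rpow_div_one_sub_of_lt_one hx (by linarith),
    sub_sub_cancel]
  · ring
  · rw [uIcc_of_le zero_le_one, uIcc_of_le (by linarith)]
    exact Icc_subset_Icc_right (by linarith)
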